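/- arXiv:1110.5022 — 3 statements merged into one kernel-verified Lean document; each statement's English description precedes it below -/
import Mathlib

section
/- Let Ω ⊂ ℝ^d be an open bounded convex set and x, y ∈ Ω distinct. Then log(‖x − b(x,y)‖ / ‖y − b(x,y)‖) = sup_π log(d(x,π)/d(y,π)), where the supremum is over all supporting hyperplanes π of Ω. -/
/-!
Write `b = x + t • (y - x)` with `1 < t`, so that `‖x - b‖ / ‖y - b‖ = t / (t - 1)`.
For a supporting hyperplane `{⟪ν, ·⟫ = c}` with `‖ν‖ = 1`, the distance from a point `p ∈ Ω` to it
is the affine function `c - ⟪ν, p⟫`, which is positive on `Ω` and nonnegative at `b ∈ closure Ω`.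
Restricted to the line through `x` and `y` this gives `(t - 1) (c - ⟪ν, x⟫) ≤ t (c - ⟪ν, y⟫)`,
so every ratio of distances is at most `t / (t - 1)`, with equality when the hyperplane passes
through `b`. Since `b ∉ Ω`, Hahn–Banach separation of `b` from the open convex set `Ω` yields such
a hyperplane, and the supremum is attained.
-/

/-- The affine hyperplane {p : ⟪ν, p⟫ = c}. -/
def hyperplane {d : ℕ} (ν : EuclideanSpace ℝ (Fin d)) (c : ℝ) :
    Set (EuclideanSpace ℝ (Fin d)) :=
  {p | (inner ℝ ν p : ℝ) = c}

/-- The hyperplane {⟪ν,·⟫ = c} (with unit normal ν) supports Ω: Ω lies in the closed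
half-space {⟪ν,·⟫ ≤ c} and the hyperplane touches the closure of Ω. -/
def IsSupporting {d : ℕ} (Ω : Set (EuclideanSpace ℝ (Fin d)))
    (ν : EuclideanSpace ℝ (Fin d)) (c : ℝ) : Prop :=
  ‖ν‖ = 1 ∧ (∀ p ∈ Ω, (inner ℝ ν p : ℝ) ≤ c) ∧ ∃ b ∈ closure Ω, (inner ℝ ν b : ℝ) = c

open Metric

section Segment

variable {E : Type*} [NormedAddCommGroup E]

theorem norm_sub_lineMap_div_norm_sub_lineMap [NormedSpace ℝ E] {x y : E} (hxy : x ≠ y) {t : ℝ}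
    (ht : 1 < t) :
    ‖x - AffineMap.lineMap x y t‖ / ‖y - AffineMap.lineMap x y t‖ = t / (t - 1) := by
  rw [← dist_eq_norm, ← dist_eq_norm, dist_left_lineMap, dist_right_lineMap,
    mul_div_mul_right _ _ (dist_ne_zero.2 hxy), Real.norm_of_nonneg (by linarith),
    Real.norm_of_nonpos (by linarith), neg_sub]

theorem real_inner_lineMap_right [InnerProductSpace ℝ E] (ν x y : E) (t : ℝ) :
    inner ℝ ν (AffineMap.lineMap x y t) = inner ℝ ν x + t * (inner ℝ ν y - inner ℝ ν x) := by
  rw [AffineMap.lineMap_apply_module', inner_add_right, real_inner_smul_right, inner_sub_right,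
    add_comm]

end Segment

section Euclidean

variable {d : ℕ}

theorem infDist_hyperplane {ν : EuclideanSpace ℝ (Fin d)} (hν : ‖ν‖ = 1)
    (p : EuclideanSpace ℝ (Fin d)) (c : ℝ) :
    infDist p (hyperplane ν c) = |inner ℝ ν p - c| := by
  set q := p + (c - inner ℝ ν p) • ν
  have hq : q ∈ hyperplane ν c := by
    change inner ℝ ν q = c
    rw [inner_add_right, real_inner_smul_right, real_inner_self_eq_norm_sq, hν]
    ring
  refine le_antisymm ?_ ((le_infDist ⟨q, hq⟩).2 fun q' hq' => ?_)
  · calc infDist p (hyperplane ν c) ≤ dist p q := infDist_le_dist_of_mem hq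
      _ = |inner ℝ ν p - c| := by simp [q, dist_eq_norm, norm_smul, hν, abs_sub_comm]
  · calc |inner ℝ ν p - c| = |inner ℝ ν (p - q')| := by rw [inner_sub_right, hq']
      _ ≤ ‖ν‖ * ‖p - q'‖ := abs_real_inner_le_norm _ _
      _ = dist p q' := by rw [hν, one_mul, dist_eq_norm]

namespace IsSupporting

variable {Ω : Set (EuclideanSpace ℝ (Fin d))} {ν : EuclideanSpace ℝ (Fin d)} {c : ℝ}

theorem inner_le_of_mem_closure (h : IsSupporting Ω ν c) {p : EuclideanSpace ℝ (Fin d)}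
    (hp : p ∈ closure Ω) : inner ℝ ν p ≤ c :=
  closure_minimal (t := {q | inner ℝ ν q ≤ c}) h.2.1
    (isClosed_le (continuous_const.inner continuous_id) continuous_const) hp

theorem inner_lt (h : IsSupporting Ω ν c) (hΩ : IsOpen Ω) {p : EuclideanSpace ℝ (Fin d)}
    (hp : p ∈ Ω) : inner ℝ ν p < c := by
  obtain ⟨ε, hε, hball⟩ := isOpen_iff.1 hΩ p hp
  have hpush : p + (ε / 2) • ν ∈ Ω := hball <| by
    rw [mem_ball, dist_eq_norm, add_sub_cancel_left, norm_smul, h.1,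
      Real.norm_of_nonneg (half_pos hε).le]
    linarith
  have := h.2.1 _ hpush
  rw [inner_add_right, real_inner_smul_right, real_inner_self_eq_norm_sq, h.1] at this
  linarith

theorem infDist_hyperplane_eq (h : IsSupporting Ω ν c) (hΩ : IsOpen Ω)
    {p : EuclideanSpace ℝ (Fin d)} (hp : p ∈ Ω) :
    infDist p (hyperplane ν c) = c - inner ℝ ν p := by
  rw [infDist_hyperplane h.1, abs_of_neg (sub_neg.2 (h.inner_lt hΩ hp)), neg_sub]

theorem log_infDist_div_infDist_le (h : IsSupporting Ω ν c) (hΩ : IsOpen Ω)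
    {x y : EuclideanSpace ℝ (Fin d)} (hx : x ∈ Ω) (hy : y ∈ Ω) {t : ℝ} (ht : 1 < t)
    (hb : AffineMap.lineMap x y t ∈ closure Ω) :
    Real.log (infDist x (hyperplane ν c) / infDist y (hyperplane ν c)) ≤
      Real.log (t / (t - 1)) := by
  have hb := h.inner_le_of_mem_closure hb
  rw [real_inner_lineMap_right] at hb
  have hxc := sub_pos.2 (h.inner_lt hΩ hx)
  have hyc := sub_pos.2 (h.inner_lt hΩ hy)
  rw [h.infDist_hyperplane_eq hΩ hx, h.infDist_hyperplane_eq hΩ hy]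
  refine Real.log_le_log (div_pos hxc hyc) ?_
  rw [div_le_div_iff₀ hyc (sub_pos.2 ht)]
  linarith

theorem infDist_div_infDist_eq (h : IsSupporting Ω ν c) (hΩ : IsOpen Ω)
    {x y : EuclideanSpace ℝ (Fin d)} (hx : x ∈ Ω) (hy : y ∈ Ω) {t : ℝ} (ht : 1 < t)
    (hb : inner ℝ ν (AffineMap.lineMap x y t) = c) :
    infDist x (hyperplane ν c) / infDist y (hyperplane ν c) = t / (t - 1) := by
  rw [real_inner_lineMap_right] at hb
  rw [h.infDist_hyperplane_eq hΩ hx, h.infDist_hyperplane_eq hΩ hy,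
    div_eq_div_iff (sub_pos.2 (h.inner_lt hΩ hy)).ne' (sub_pos.2 ht).ne']
  linarith

end IsSupporting

theorem exists_isSupporting_of_mem_frontier {Ω : Set (EuclideanSpace ℝ (Fin d))}
    (hΩo : IsOpen Ω) (hΩc : Convex ℝ Ω) {b : EuclideanSpace ℝ (Fin d)} (hb : b ∈ frontier Ω) :
    ∃ ν, IsSupporting Ω ν (inner ℝ ν b) := by
  rw [hΩo.frontier_eq] at hb
  obtain ⟨f, hf⟩ := geometric_hahn_banach_open_point hΩc hΩo hb.2
  obtain ⟨p, hp⟩ := closure_nonempty_iff.1 ⟨b, hb.1⟩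
  set ν₀ := (InnerProductSpace.toDual ℝ _).symm f
  have hν₀f (q : EuclideanSpace ℝ (Fin d)) : inner ℝ ν₀ q = f q :=
    InnerProductSpace.toDual_symm_apply
  have hν₀ : ν₀ ≠ 0 := by
    intro h0
    have := hf p hp
    simp only [← hν₀f, h0, inner_zero_left, lt_self_iff_false] at this
  refine ⟨‖ν₀‖⁻¹ • ν₀, norm_smul_inv_norm hν₀, fun q hq => ?_, b, hb.1, rfl⟩
  simp only [real_inner_smul_left, hν₀f]
  exact mul_le_mul_of_nonneg_left (hf q hq).le (by positivity)

end Euclidean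

theorem stmt4_general {d : ℕ} (Ω : Set (EuclideanSpace ℝ (Fin d)))
    (hΩo : IsOpen Ω) (hΩc : Convex ℝ Ω)
    (x y : EuclideanSpace ℝ (Fin d)) (hx : x ∈ Ω) (hy : y ∈ Ω) (hxy : x ≠ y)
    (bxy : EuclideanSpace ℝ (Fin d)) (hbf : bxy ∈ frontier Ω)
    (t : ℝ) (ht : 1 < t) (hbeq : bxy = x + t • (y - x)) :
    Real.log (‖x - bxy‖ / ‖y - bxy‖) =
      sSup {r : ℝ | ∃ ν c, IsSupporting Ω ν c ∧
        r = Real.log (Metric.infDist x (hyperplane ν c) /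
              Metric.infDist y (hyperplane ν c))} := by
  rw [← add_comm, ← AffineMap.lineMap_apply_module'] at hbeq
  subst hbeq
  obtain ⟨ν, hν⟩ := exists_isSupporting_of_mem_frontier hΩo hΩc hbf
  rw [norm_sub_lineMap_div_norm_sub_lineMap hxy ht]
  refine (IsGreatest.csSup_eq ⟨?_, ?_⟩).symm
  · exact ⟨ν, _, hν, by rw [hν.infDist_div_infDist_eq hΩo hx hy ht rfl]⟩
  · rintro r ⟨ν', c', hν', rfl⟩
    exact hν'.log_infDist_div_infDist_le hΩo hx hy ht (frontier_subset_closure hbf)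

/-- Variational characterization of the Funk metric (Theorem 1):
log(‖x−b(x,y)‖/‖y−b(x,y)‖) = sup over supporting hyperplanes π of log(d(x,π)/d(y,π)). -/
theorem stmt4 {d : ℕ} (Ω : Set (EuclideanSpace ℝ (Fin d)))
    (hΩo : IsOpen Ω) (hΩb : Bornology.IsBounded Ω) (hΩc : Convex ℝ Ω)
    (x y : EuclideanSpace ℝ (Fin d)) (hx : x ∈ Ω) (hy : y ∈ Ω) (hxy : x ≠ y)
    (bxy : EuclideanSpace ℝ (Fin d)) (hbf : bxy ∈ frontier Ω)
    (t : ℝ) (ht : 1 < t) (hbeq : bxy = x + t • (y - x)) :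
    Real.log (‖x - bxy‖ / ‖y - bxy‖) =
      sSup {r : ℝ | ∃ ν c, IsSupporting Ω ν c ∧
        r = Real.log (Metric.infDist x (hyperplane ν c) /
              Metric.infDist y (hyperplane ν c))} :=
  stmt4_general Ω hΩo hΩc x y hx hy hxy bxy hbf t ht hbeq
end

section
/- Let Ω ⊂ ℝ^d be an open bounded strictly convex set (∂Ω contains no nondegenerate line segment). If x, y, z ∈ Ω satisfy F(x,y) + F(y,z) = F(x,z) with x, y, z pairwise distinct, then x, y, z are collinear with y between x and z. Hence Funk geodesics in a strictly convex domain are exactly the Euclidean line segments. -/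
private lemma funk_ratio {V : Type*} [NormedAddCommGroup V] [NormedSpace ℝ V]
    {x y p : V} {t : ℝ} (ht : 1 < t) (hxy : x ≠ y) (hp : p = x + t • (y - x)) :
    ‖x - p‖ / ‖y - p‖ = t / (t - 1) := by
  have hv : (0:ℝ) < ‖y - x‖ := by
    rw [norm_pos_iff, sub_ne_zero]; exact hxy.symm
  have h1 : x - p = (-t) • (y - x) := by rw [hp]; match_scalars <;> ring
  have h2 : y - p = (1 - t) • (y - x) := by rw [hp]; match_scalars <;> ring
  rw [h1, h2, norm_smul, norm_smul, Real.norm_eq_abs, Real.norm_eq_abs,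
    abs_of_neg (by linarith : (-t) < 0), abs_of_neg (by linarith : (1 - t) < 0),
    mul_div_mul_right _ _ (ne_of_gt hv)]
  ring_nf

private lemma frontier_param {d : ℕ} {Ω : Set (EuclideanSpace ℝ (Fin d))}
    (hΩo : IsOpen Ω) (hΩc : Convex ℝ Ω) {x : EuclideanSpace ℝ (Fin d)} (hx : x ∈ Ω)
    (v : EuclideanSpace ℝ (Fin d)) {s s' : ℝ} (hs : 0 < s) (hs' : 0 < s')
    (hp : x + s • v ∈ frontier Ω) (hq : x + s' • v ∈ frontier Ω) : s = s' := by
  have key : ∀ r r' : ℝ, 0 < r → r < r' → x + r' • v ∈ frontier Ω → x + r • v ∈ Ω := by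
    intro r r' hr hrr' hq'
    have hcl : x + r' • v ∈ closure Ω := frontier_subset_closure hq'
    have h0 : (0:ℝ) < r' := hr.trans hrr'
    have hco := hΩc.combo_interior_closure_mem_interior
      (x := x) (y := x + r' • v) (a := 1 - r/r') (b := r/r')
      (by rwa [hΩo.interior_eq]) hcl
      (by have : r/r' < 1 := (div_lt_one h0).2 hrr'; linarith)
      (by positivity) (by ring)
    rw [hΩo.interior_eq] at hco
    have hpt : x + r • v = (1 - r/r') • x + (r/r') • (x + r' • v) := by
      match_scalars
      · ring
      · field_simp
    rw [hpt]; exact hco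
  rcases lt_trichotomy s s' with h | h | h
  · exact absurd (key s s' hs h hq) (by rw [hΩo.frontier_eq] at hp; exact hp.2)
  · exact h
  · exact absurd (key s' s hs' h hp) (by rw [hΩo.frontier_eq] at hq; exact hq.2)

set_option maxHeartbeats 1000000 in
/-- In an open bounded strictly convex domain (no nondegenerate segments in the boundary),
equality F(x,y) + F(y,z) = F(x,z) for pairwise distinct points forces x, y, z to be
collinear with y strictly between x and z: Funk geodesics are Euclidean segments. -/
theorem stmt8 {d : ℕ} (Ω : Set (EuclideanSpace ℝ (Fin d)))
    (hΩo : IsOpen Ω) (hΩb : Bornology.IsBounded Ω) (hΩc : Convex ℝ Ω)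
    (hstrict : ∀ p ∈ frontier Ω, ∀ q ∈ frontier Ω, p ≠ q → ¬ segment ℝ p q ⊆ frontier Ω)
    (b : EuclideanSpace ℝ (Fin d) → EuclideanSpace ℝ (Fin d) → EuclideanSpace ℝ (Fin d))
    (hb : ∀ x ∈ Ω, ∀ y ∈ Ω, x ≠ y →
      b x y ∈ frontier Ω ∧ ∃ t > (1 : ℝ), b x y = x + t • (y - x))
    (F : EuclideanSpace ℝ (Fin d) → EuclideanSpace ℝ (Fin d) → ℝ)
    (hF : ∀ x ∈ Ω, ∀ y ∈ Ω, x ≠ y → F x y = Real.log (‖x - b x y‖ / ‖y - b x y‖))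
    (x y z : EuclideanSpace ℝ (Fin d)) (hx : x ∈ Ω) (hy : y ∈ Ω) (hz : z ∈ Ω)
    (hxy : x ≠ y) (hyz : y ≠ z) (hxz : x ≠ z)
    (heq : F x y + F y z = F x z) :
    ∃ s ∈ Set.Ioo (0 : ℝ) 1, y = x + s • (z - x) := by
  obtain ⟨hfa, t₁, ht₁, ha⟩ := hb x hx y hy hxy
  obtain ⟨hfc, t₂, ht₂, hc⟩ := hb y hy z hz hyz
  obtain ⟨hfe, T, hT, he⟩ := hb x hx z hz hxz
  -- the values of F
  have hF1 : F x y = Real.log (t₁ / (t₁ - 1)) := by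
    rw [hF x hx y hy hxy, funk_ratio ht₁ hxy ha]
  have hF2 : F y z = Real.log (t₂ / (t₂ - 1)) := by
    rw [hF y hy z hz hyz, funk_ratio ht₂ hyz hc]
  have hF3 : F x z = Real.log (T / (T - 1)) := by
    rw [hF x hx z hz hxz, funk_ratio hT hxz he]
  have hA : (0:ℝ) < t₁ / (t₁ - 1) := by
    apply div_pos <;> linarith
  have hB : (0:ℝ) < t₂ / (t₂ - 1) := by
    apply div_pos <;> linarith
  have hC : (0:ℝ) < T / (T - 1) := by
    apply div_pos <;> linarith
  have hprod : (t₁ / (t₁ - 1)) * (t₂ / (t₂ - 1)) = T / (T - 1) := by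
    have h1 : Real.log ((t₁ / (t₁ - 1)) * (t₂ / (t₂ - 1))) = Real.log (T / (T - 1)) := by
      rw [Real.log_mul (ne_of_gt hA) (ne_of_gt hB), ← hF1, ← hF2, ← hF3]; exact heq
    calc (t₁ / (t₁ - 1)) * (t₂ / (t₂ - 1))
        = Real.exp (Real.log ((t₁ / (t₁ - 1)) * (t₂ / (t₂ - 1)))) :=
          (Real.exp_log (mul_pos hA hB)).symm
      _ = Real.exp (Real.log (T / (T - 1))) := by rw [h1]
      _ = T / (T - 1) := Real.exp_log hC
  -- the key algebraic identity
  have hE : T * (t₁ + t₂ - 1) = t₁ * t₂ := by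
    have h1 : t₁ - 1 ≠ 0 := by linarith
    have h2 : t₂ - 1 ≠ 0 := by linarith
    have h3 : T - 1 ≠ 0 := by linarith
    field_simp at hprod
    nlinarith [hprod]
  have hD : (0:ℝ) < t₁ + t₂ - 1 := by linarith
  by_cases hcol : ∃ k : ℝ, z - y = k • (y - x)
  · -- collinear case
    obtain ⟨k, hk⟩ := hcol
    set m : ℝ := k + 1 with hm
    have hzx : z - x = m • (y - x) := by
      have : z - x = (z - y) + (y - x) := by abel
      rw [this, hk, hm]; match_scalars <;> ring
    have hm0 : m ≠ 0 := by
      intro h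
      apply hxz
      have : z - x = 0 := by rw [hzx, h, zero_smul]
      have := sub_eq_zero.mp this
      exact this.symm
    have hm1 : m ≠ 1 := by
      intro h
      apply hyz
      have : z - x = y - x := by rw [hzx, h, one_smul]
      exact (sub_left_inj.mp this).symm
    rcases lt_or_ge 1 m with hm2 | hm2
    · -- y strictly between x and z
      refine ⟨1/m, ⟨by positivity, by rw [div_lt_one (by linarith)]; exact hm2⟩, ?_⟩
      rw [hzx, smul_smul, one_div, inv_mul_cancel₀ hm0, one_smul]
      rw [add_sub_cancel]
    · exfalso
      -- frontier points on the line
      have hP1 : x + t₁ • (y - x) ∈ frontier Ω := ha ▸ hfa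
      have hP3 : x + (T * m) • (y - x) ∈ frontier Ω := by
        have : x + (T * m) • (y - x) = x + T • (z - x) := by
          rw [hzx, smul_smul]
        rw [this, ← he]; exact hfe
      have hP2 : x + (1 + t₂ * (m - 1)) • (y - x) ∈ frontier Ω := by
        have hyx : y = x + (1:ℝ) • (y - x) := by match_scalars <;> ring
        have : x + (1 + t₂ * (m - 1)) • (y - x) = y + t₂ • (z - y) := by
          rw [hk]
          match_scalars <;> ring
        rw [this, ← hc]; exact hfc
      have hmlt : m < 1 := lt_of_le_of_ne hm2 hm1
      rcases lt_trichotomy m 0 with hmneg | hmz | hmpos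
      · -- m < 0 : both b x z and b y z have negative parameters
        have hq : 1 + t₂ * (m - 1) < m := by nlinarith
        have hqneg : 1 + t₂ * (m - 1) < 0 := by linarith
        have hTm : T * m < 0 := mul_neg_of_pos_of_neg (by linarith) hmneg
        have h3' : x + (-(T * m)) • (-(y - x)) ∈ frontier Ω := by
          rw [neg_smul, smul_neg, neg_neg]; exact hP3
        have h2' : x + (-(1 + t₂ * (m - 1))) • (-(y - x)) ∈ frontier Ω := by
          rw [neg_smul, smul_neg, neg_neg]; exact hP2
        have := frontier_param hΩo hΩc hx (-(y - x)) (by linarith) (by linarith) h3' h2'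
        have hTmq : T * m = 1 + t₂ * (m - 1) := by linarith
        have hmul : T * m * (t₁ + t₂ - 1) = m * (t₁ * t₂) := by
          rw [mul_comm T m, mul_assoc, hE]
        rw [hTmq] at hmul
        nlinarith [mul_pos (show (0:ℝ) < t₂ - 1 by linarith) hD,
          mul_pos (mul_pos (show (0:ℝ) < -m by linarith) (show (0:ℝ) < t₂ by linarith))
            (show (0:ℝ) < t₂ - 1 by linarith), hmul]
      · exact hm0 hmz
      · -- 0 < m < 1
        have hTm : 0 < T * m := mul_pos (by linarith) hmpos
        have := frontier_param hΩo hΩc hx (y - x) hTm (by linarith) hP3 hP1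
        -- T * m = t₁
        have hmul : T * m * (t₁ + t₂ - 1) = m * (t₁ * t₂) := by
          rw [mul_comm T m, mul_assoc, hE]
        rw [this] at hmul
        nlinarith [mul_pos (show (0:ℝ) < t₁ by linarith)
          (mul_pos (show (0:ℝ) < t₂ by linarith) (show (0:ℝ) < 1 - m by linarith)),
          mul_pos (show (0:ℝ) < t₁ by linarith) (show (0:ℝ) < t₁ - 1 by linarith), hmul]
  · -- non-collinear case: contradiction with strict convexity
    exfalso
    push_neg at hcol
    set u : ℝ := t₁ / (t₁ + t₂ - 1) with hu_def
    have hu0 : 0 < u := by rw [hu_def]; positivity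
    have hu1 : u < 1 := by
      rw [hu_def, div_lt_one hD]; linarith
    have hT' : T = t₁ * t₂ / (t₁ + t₂ - 1) := by
      field_simp
      linarith [hE]
    have hkey : b x z = (1 - u) • (b x y) + u • (b y z) := by
      rw [he, ha, hc, hu_def, hT']
      match_scalars <;> (field_simp; try ring)
    have hac : b x y ≠ b y z := by
      intro h
      apply hcol ((t₁ - 1) / t₂)
      have h2 : x + t₁ • (y - x) = y + t₂ • (z - y) := by rw [ha, hc] at h; exact h
      have h3 : t₂ • (z - y) = (t₁ - 1) • (y - x) := by
        have h5 : t₂ • (z - y) = x + t₁ • (y - x) - y := by rw [h2]; abel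
        rw [h5]; match_scalars <;> ring
      have ht₂0 : t₂ ≠ 0 := by linarith
      calc z - y = t₂⁻¹ • (t₂ • (z - y)) := by rw [smul_smul, inv_mul_cancel₀ ht₂0, one_smul]
        _ = t₂⁻¹ • ((t₁ - 1) • (y - x)) := by rw [h3]
        _ = ((t₁ - 1) / t₂) • (y - x) := by rw [smul_smul]; congr 1; field_simp
    -- the whole segment is in the frontier
    have hseg : segment ℝ (b x y) (b y z) ⊆ frontier Ω := by
      intro p hp
      have hpcl : p ∈ closure Ω :=
        hΩc.closure.segment_subset (frontier_subset_closure hfa)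
          (frontier_subset_closure hfc) hp
      rw [hΩo.frontier_eq]
      refine ⟨hpcl, ?_⟩
      intro hpΩ
      obtain ⟨μa, μb, hμa, hμb, hab, hpe⟩ := hp
      have hμa' : μa = 1 - μb := by linarith
      have hμbne : μb ≠ 0 ∨ True := Or.inr trivial
      have henotin : b x z ∉ Ω := by
        rw [hΩo.frontier_eq] at hfe; exact hfe.2
      rcases lt_trichotomy u μb with h | h | h
      · -- e between a and p
        have hμb0 : 0 < μb := lt_trans hu0 h
        have hco := hΩc.combo_interior_closure_mem_interior
          (x := p) (y := b x y) (a := u/μb) (b := 1 - u/μb)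
          (by rwa [hΩo.interior_eq]) (frontier_subset_closure hfa)
          (div_pos hu0 hμb0)
          (by have : u/μb < 1 := (div_lt_one hμb0).2 h; linarith)
          (by ring)
        rw [hΩo.interior_eq] at hco
        apply henotin
        have : b x z = (u/μb) • p + (1 - u/μb) • (b x y) := by
          rw [hkey, ← hpe, hμa']
          match_scalars <;> (field_simp; try ring)
        rw [this]; exact hco
      · apply henotin
        have : b x z = p := by
          rw [hkey, ← hpe, hμa', h]
        rw [this]; exact hpΩ
      · -- e between p and c
        have hμb1 : μb < 1 := lt_trans h hu1
        have hμa0 : 0 < 1 - μb := by linarith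
        have hco := hΩc.combo_interior_closure_mem_interior
          (x := p) (y := b y z) (a := (1-u)/(1-μb)) (b := 1 - (1-u)/(1-μb))
          (by rwa [hΩo.interior_eq]) (frontier_subset_closure hfc)
          (div_pos (by linarith) hμa0)
          (by
            have : (1-u)/(1-μb) ≤ 1 := by
              rw [div_le_one hμa0]; linarith
            linarith)
          (by ring)
        rw [hΩo.interior_eq] at hco
        apply henotin
        have : b x z = ((1-u)/(1-μb)) • p + (1 - (1-u)/(1-μb)) • (b y z) := by
          rw [hkey, ← hpe, hμa']
          match_scalars <;> (field_simp; try ring)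
        rw [this]; exact hco
    exact hstrict _ hfa _ hfc hac hseg
end

section
/- Let X be a geodesic metric space, {C_σ} a family of subsets with all distances d(·, C_σ) positive on a convex subset T, and for x ∈ T, ξ a unit tangent direction, let p̃(x,ξ) = sup_σ ⟨ν_σ(x), ξ⟩ / d(x, C_σ) (in a Riemannian manifold T, ν_σ(x) the unit initial vector of the geodesic from x to its nearest point on C_σ). Then for any C¹ path α : [0,1] → T from x to y, F₂(x,y) = sup_σ log(d(x,C_σ)/d(y,C_σ)) ≤ ∫₀¹ p̃(α(t), α'(t)) dt. Hence F₂(x,y) ≤ F₃(x,y) := inf_α ∫₀¹ p̃(α(t), α'(t)) dt. -/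
open Metric MeasureTheory

/-! The function `t ↦ -log d(α t, C_σ)` has derivative `⟪ν_σ(α t), α' t⟫ / d(α t, C_σ)`, which is
bounded by the Finsler integrand `p̃(α t, α' t)`. Integrating gives
`log (d(x, C_σ) / d(y, C_σ)) ≤ ∫₀¹ p̃(α, α')` for each `σ`, and taking the supremum over `σ`
(and then the infimum over paths) gives both claims. -/

section

variable {E : Type*} [NormedAddCommGroup E] [InnerProductSpace ℝ E] [CompleteSpace E]

theorem HasGradientAt.comp_hasDerivAt {f : E → ℝ} {g : E} {α : ℝ → E} {v : E} {t : ℝ}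
    (hf : HasGradientAt f g (α t)) (hα : HasDerivAt α v t) :
    HasDerivAt (fun s => f (α s)) (inner ℝ g v) t :=
  hf.hasFDerivAt.comp_hasDerivAt t hα

theorem hasDerivAt_neg_log_comp_of_hasGradientAt {f : E → ℝ} {g : E} {α : ℝ → E} {v : E}
    {t : ℝ} (hf : HasGradientAt f g (α t)) (hα : HasDerivAt α v t) (hpos : f (α t) ≠ 0) :
    HasDerivAt (fun s => -Real.log (f (α s))) (-inner ℝ g v / f (α t)) t := by
  rw [neg_div]
  exact ((hf.comp_hasDerivAt hα).log hpos).neg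

theorem log_div_le_integral_of_hasGradientAt {f : E → ℝ} {grad : ℝ → E} {α α' : ℝ → E}
    {φ : ℝ → ℝ} {a b : ℝ} (hab : a ≤ b)
    (hα : ∀ t ∈ Set.Icc a b, HasDerivAt α (α' t) t)
    (hf : ∀ t ∈ Set.Icc a b, HasGradientAt f (grad t) (α t))
    (hpos : ∀ t ∈ Set.Icc a b, 0 < f (α t))
    (hφ : IntegrableOn φ (Set.Icc a b))
    (hle : ∀ t ∈ Set.Ioo a b, -inner ℝ (grad t) (α' t) / f (α t) ≤ φ t) :
    Real.log (f (α a) / f (α b)) ≤ ∫ t in a..b, φ t := by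
  have hderiv : ∀ t ∈ Set.Icc a b, HasDerivAt (fun s => -Real.log (f (α s)))
      (-inner ℝ (grad t) (α' t) / f (α t)) t := fun t ht =>
    hasDerivAt_neg_log_comp_of_hasGradientAt (hf t ht) (hα t ht) (hpos t ht).ne'
  have hcont : ContinuousOn (fun s => -Real.log (f (α s))) (Set.Icc a b) := fun t ht =>
    (hderiv t ht).continuousAt.continuousWithinAt
  calc Real.log (f (α a) / f (α b))
      = -Real.log (f (α b)) - -Real.log (f (α a)) := by
        rw [Real.log_div (hpos a ⟨le_rfl, hab⟩).ne' (hpos b ⟨hab, le_rfl⟩).ne']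
        ring
    _ ≤ ∫ t in a..b, φ t :=
        intervalIntegral.sub_le_integral_of_hasDeriv_right_of_le hab hcont
          (fun t ht => (hderiv t (Set.Ioo_subset_Icc_self ht)).hasDerivWithinAt) hφ hle

end

theorem stmt19_general {E : Type*} [NormedAddCommGroup E] [InnerProductSpace ℝ E] [CompleteSpace E]
    {S : Type*} [Nonempty S] (T : Set E) (C : S → Set E)
    (hd : ∀ x ∈ T, ∀ σ, 0 < infDist x (C σ))
    (ν : S → E → E)
    (hgrad : ∀ σ, ∀ x ∈ T, HasGradientAt (fun q => infDist q (C σ)) (-(ν σ x)) x)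
    (p : E → E → ℝ)
    (hp : ∀ x ξ, p x ξ = sSup {r : ℝ | ∃ σ, r = (inner ℝ (ν σ x) ξ : ℝ) / infDist x (C σ)})
    (hbdd : ∀ x ∈ T, ∀ ξ : E, BddAbove {r : ℝ | ∃ σ, r = (inner ℝ (ν σ x) ξ : ℝ) / infDist x (C σ)})
    (x y : E) :
    (∀ α α' : ℝ → E, (∀ t ∈ Set.Icc (0 : ℝ) 1, HasDerivAt α (α' t) t) →
      ContinuousOn α' (Set.Icc (0 : ℝ) 1) → (∀ t ∈ Set.Icc (0 : ℝ) 1, α t ∈ T) →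
      α 0 = x → α 1 = y →
      IntervalIntegrable (fun t => p (α t) (α' t)) volume 0 1 →
      sSup {r : ℝ | ∃ σ, r = Real.log (infDist x (C σ) / infDist y (C σ))} ≤
        ∫ t in (0 : ℝ)..1, p (α t) (α' t)) ∧
    ({l : ℝ | ∃ α α' : ℝ → E, (∀ t ∈ Set.Icc (0 : ℝ) 1, HasDerivAt α (α' t) t) ∧
        ContinuousOn α' (Set.Icc (0 : ℝ) 1) ∧ (∀ t ∈ Set.Icc (0 : ℝ) 1, α t ∈ T) ∧
        α 0 = x ∧ α 1 = y ∧ IntervalIntegrable (fun t => p (α t) (α' t)) volume 0 1 ∧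
        l = ∫ t in (0 : ℝ)..1, p (α t) (α' t)}.Nonempty →
      sSup {r : ℝ | ∃ σ, r = Real.log (infDist x (C σ) / infDist y (C σ))} ≤
        sInf {l : ℝ | ∃ α α' : ℝ → E, (∀ t ∈ Set.Icc (0 : ℝ) 1, HasDerivAt α (α' t) t) ∧
          ContinuousOn α' (Set.Icc (0 : ℝ) 1) ∧ (∀ t ∈ Set.Icc (0 : ℝ) 1, α t ∈ T) ∧
          α 0 = x ∧ α 1 = y ∧ IntervalIntegrable (fun t => p (α t) (α' t)) volume 0 1 ∧
          l = ∫ t in (0 : ℝ)..1, p (α t) (α' t)}) := by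
  have along_path : ∀ α α' : ℝ → E, (∀ t ∈ Set.Icc (0 : ℝ) 1, HasDerivAt α (α' t) t) →
      (∀ t ∈ Set.Icc (0 : ℝ) 1, α t ∈ T) → α 0 = x → α 1 = y →
      IntervalIntegrable (fun t => p (α t) (α' t)) volume 0 1 →
      sSup {r : ℝ | ∃ σ, r = Real.log (infDist x (C σ) / infDist y (C σ))} ≤
        ∫ t in (0 : ℝ)..1, p (α t) (α' t) := by
    rintro α α' hα hT rfl rfl hint
    refine csSup_le ⟨_, Classical.arbitrary S, rfl⟩ ?_
    rintro r ⟨σ, rfl⟩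
    refine log_div_le_integral_of_hasGradientAt zero_le_one hα (fun t ht => hgrad σ _ (hT t ht))
      (fun t ht => hd _ (hT t ht) σ)
      ((intervalIntegrable_iff_integrableOn_Icc_of_le zero_le_one).mp hint) fun t ht => ?_
    rw [inner_neg_left, neg_neg, hp]
    exact le_csSup (hbdd _ (hT t (Set.Ioo_subset_Icc_self ht)) _) ⟨σ, rfl⟩
  refine ⟨fun α α' hα _ hT h0 h1 hint => along_path α α' hα hT h0 h1 hint,
    fun hne => le_csInf hne ?_⟩
  rintro l ⟨α, α', hα, -, hT, h0, h1, hint, rfl⟩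
  exact along_path α α' hα hT h0 h1 hint

/-- Comparison F₂ ≤ F₃ (Theorem 2): given convex complete subsets C_σ at positive distance
from T, with −ν_σ(x) the (unit) gradient of x ↦ d(x,C_σ), and the Finsler norm
p̃(x,ξ) = sup_σ ⟪ν_σ(x),ξ⟫/d(x,C_σ), every C¹ path α from x to y in T satisfies
F₂(x,y) = sup_σ log(d(x,C_σ)/d(y,C_σ)) ≤ ∫₀¹ p̃(α(t),α'(t)) dt; hence
F₂(x,y) ≤ F₃(x,y) := inf over such paths of their p̃-length. -/
theorem stmt19 {E : Type*} [NormedAddCommGroup E] [InnerProductSpace ℝ E] [CompleteSpace E]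
    {S : Type*} [Nonempty S] (T : Set E) (C : S → Set E)
    (hCne : ∀ σ, (C σ).Nonempty) (hCcomp : ∀ σ, IsComplete (C σ))
    (hCconv : ∀ σ, Convex ℝ (C σ))
    (hd : ∀ x ∈ T, ∀ σ, 0 < infDist x (C σ))
    (ν : S → E → E) (hν : ∀ σ, ∀ x ∈ T, ‖ν σ x‖ = 1)
    (hgrad : ∀ σ, ∀ x ∈ T, HasGradientAt (fun q => infDist q (C σ)) (-(ν σ x)) x)
    (p : E → E → ℝ)
    (hp : ∀ x ξ, p x ξ = sSup {r : ℝ | ∃ σ, r = (inner ℝ (ν σ x) ξ : ℝ) / infDist x (C σ)})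
    (hbdd : ∀ x ∈ T, ∀ ξ : E, BddAbove {r : ℝ | ∃ σ, r = (inner ℝ (ν σ x) ξ : ℝ) / infDist x (C σ)})
    (x y : E) (hx : x ∈ T) (hy : y ∈ T) :
    (∀ α α' : ℝ → E, (∀ t ∈ Set.Icc (0 : ℝ) 1, HasDerivAt α (α' t) t) →
      ContinuousOn α' (Set.Icc (0 : ℝ) 1) → (∀ t ∈ Set.Icc (0 : ℝ) 1, α t ∈ T) →
      α 0 = x → α 1 = y →
      IntervalIntegrable (fun t => p (α t) (α' t)) volume 0 1 →
      sSup {r : ℝ | ∃ σ, r = Real.log (infDist x (C σ) / infDist y (C σ))} ≤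
        ∫ t in (0 : ℝ)..1, p (α t) (α' t)) ∧
    ({l : ℝ | ∃ α α' : ℝ → E, (∀ t ∈ Set.Icc (0 : ℝ) 1, HasDerivAt α (α' t) t) ∧
        ContinuousOn α' (Set.Icc (0 : ℝ) 1) ∧ (∀ t ∈ Set.Icc (0 : ℝ) 1, α t ∈ T) ∧
        α 0 = x ∧ α 1 = y ∧ IntervalIntegrable (fun t => p (α t) (α' t)) volume 0 1 ∧
        l = ∫ t in (0 : ℝ)..1, p (α t) (α' t)}.Nonempty →
      sSup {r : ℝ | ∃ σ, r = Real.log (infDist x (C σ) / infDist y (C σ))} ≤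
        sInf {l : ℝ | ∃ α α' : ℝ → E, (∀ t ∈ Set.Icc (0 : ℝ) 1, HasDerivAt α (α' t) t) ∧
          ContinuousOn α' (Set.Icc (0 : ℝ) 1) ∧ (∀ t ∈ Set.Icc (0 : ℝ) 1, α t ∈ T) ∧
          α 0 = x ∧ α 1 = y ∧ IntervalIntegrable (fun t => p (α t) (α' t)) volume 0 1 ∧
          l = ∫ t in (0 : ℝ)..1, p (α t) (α' t)}) :=
  stmt19_general T C hd ν hgrad p hp hbdd x y
end
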